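/- Let m be an odd positive integer, ℓ = ⌈log₂ m⌉, and let K(m) be the least k such that the length-km prefix of the Thue-Morse word is not a k-anti-power. If K(m) > 2^ℓ + 1, then t_{m+1} t_{m+2} = 11 and t_{2m+1} t_{2m+2} = 10. -/

import Mathlib

open Filter

/-- The Thue-Morse word, indexed from 1: `tm i` is the parity of the number of
1's in the binary expansion of `i - 1`. -/
def tm (i : ℕ) : ℕ := (Nat.digits 2 (i - 1)).sum % 2

/-- The factor `t_a t_{a+1} ⋯ t_b` of the Thue-Morse word. -/
def seg (a b : ℕ) : List ℕ := (List.range (b + 1 - a)).map (fun j => tm (a + j))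

/-- The `i`-th block of length `m` of the Thue-Morse word (blocks indexed from 0):
`t_{im+1} ⋯ t_{(i+1)m}`. -/
def block (m i : ℕ) : List ℕ := seg (i * m + 1) ((i + 1) * m)

/-- The prefix of the Thue-Morse word of length `k * m` is a `k`-anti-power:
its `k` consecutive blocks of length `m` are pairwise distinct. -/
def IsAntiPowerPrefix (m k : ℕ) : Prop :=
  ∀ i j, i < k → j < k → i ≠ j → block m i ≠ block m j

/-- `w` is a factor (contiguous substring) of the Thue-Morse word. -/
def IsFactor (w : List ℕ) : Prop :=
  ∃ a : ℕ, w = (List.range w.length).map (fun j => tm (a + 1 + j))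

/-- `δ(m) = ⌈log₂ (m/3)⌉` (a nonnegative integer for `m ≥ 2`). -/
noncomputable def delta (m : ℕ) : ℕ := (⌈Real.logb 2 ((m : ℝ) / 3)⌉).toNat

/-- `⌈log₂ m⌉`. -/
noncomputable def ell (m : ℕ) : ℕ := (⌈Real.logb 2 (m : ℝ)⌉).toNat

/-- `K(m)`: the smallest `k` such that the prefix of the Thue-Morse word of
length `k * m` is not a `k`-anti-power. -/
noncomputable def Kap (m : ℕ) : ℕ := sInf {k | ¬ IsAntiPowerPrefix m k}

/-- `γ(k)`: the smallest odd positive integer `m` such that the prefix of the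
Thue-Morse word of length `k * m` is a `k`-anti-power. -/
noncomputable def gam (k : ℕ) : ℕ := sInf {m | Odd m ∧ IsAntiPowerPrefix m k}

/-- `Γ(k)`: the largest odd positive integer `m` such that the prefix of the
Thue-Morse word of length `k * m` is not a `k`-anti-power. -/
noncomputable def Gam (k : ℕ) : ℕ := sSup {m | Odd m ∧ ¬ IsAntiPowerPrefix m k}

/-- The Thue-Morse morphism `μ` (0 ↦ 01, 1 ↦ 10) on words. -/
def mu (w : List ℕ) : List ℕ := w.flatMap (fun a => if a = 0 then [0, 1] else [1, 0])

/-!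
For `r < N = 2^n` the binary expansion of `N m + r` is that of `r` followed by that of `m`, so
`t_{Nm+r+1} ≡ t_{m+1} + t_{r+1} (mod 2)`. Hence if `t_{m+1} = 0`, block `2^ℓ` of length `m`
repeats block `0`; and if `t_{m+1} = 1`, `t_{m+2} = 0`, block `2^ℓ` repeats block `2^(ℓ-1)`.
The values at `2m+1`, `2m+2` follow from `t_{2n+1} = t_{n+1}` and `t_{2n+2} = 1 - t_{n+1}`.
-/

/-- `thueMorse n = t_{n+1}`: the Thue-Morse word indexed from 0. -/
def thueMorse (n : ℕ) : ℕ := (Nat.digits 2 n).sum % 2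

theorem tm_succ (n : ℕ) : tm (n + 1) = thueMorse n := rfl

theorem thueMorse_lt_two (n : ℕ) : thueMorse n < 2 := Nat.mod_lt _ two_pos

theorem thueMorse_zero : thueMorse 0 = 0 := by simp [thueMorse]

theorem thueMorse_one : thueMorse 1 = 1 := by simp [thueMorse]

theorem thueMorse_two_pow_mul_add {n a b : ℕ} (hb : b < 2 ^ n) :
    thueMorse (2 ^ n * a + b) = (thueMorse a + thueMorse b) % 2 := by
  rcases a.eq_zero_or_pos with rfl | ha
  · simp [thueMorse]
  have hlen : (Nat.digits 2 b).length ≤ n := (Nat.digits_length_le_iff one_lt_two b).2 hb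
  have hdigits := Nat.digits_append_zeroes_append_digits (k := n - (Nat.digits 2 b).length)
    (n := b) one_lt_two ha
  rw [Nat.add_sub_cancel' hlen, add_comm] at hdigits
  simp only [thueMorse, ← hdigits, List.sum_append, List.sum_replicate, smul_zero, add_zero]
  omega

theorem thueMorse_two_mul (n : ℕ) : thueMorse (2 * n) = thueMorse n := by
  simpa [thueMorse_zero, Nat.mod_eq_of_lt (thueMorse_lt_two n)] using
    thueMorse_two_pow_mul_add (n := 1) (a := n) (b := 0) (by norm_num)

theorem thueMorse_two_mul_add_one (n : ℕ) : thueMorse (2 * n + 1) = (thueMorse n + 1) % 2 := by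
  simpa [thueMorse_one] using thueMorse_two_pow_mul_add (n := 1) (a := n) (b := 1) (by norm_num)

theorem block_eq_block {m i j : ℕ}
    (h : ∀ r < m, thueMorse (i * m + r) = thueMorse (j * m + r)) : block m i = block m j := by
  have hlen (x : ℕ) : (x + 1) * m + 1 - (x * m + 1) = m := by
    rw [add_mul, one_mul]; omega
  unfold block seg
  rw [hlen i, hlen j]
  refine List.map_congr_left fun r hr => ?_
  rw [add_right_comm, tm_succ, add_right_comm, tm_succ]
  exact h r (List.mem_range.mp hr)

theorem isAntiPowerPrefix_of_lt_Kap {m k : ℕ} (hk : k < Kap m) : IsAntiPowerPrefix m k :=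
  not_not.mp (Nat.notMem_of_lt_sInf hk)

theorem ell_eq_clog (m : ℕ) : ell m = Nat.clog 2 m := by
  rw [ell, show (2 : ℝ) = ((2 : ℕ) : ℝ) by norm_num,
    Real.ceil_logb_natCast (Nat.cast_nonneg m), Int.clog_natCast, Int.toNat_natCast]

theorem thueMorse_eq_one_of_isAntiPowerPrefix {m n : ℕ} (hm : m ≤ 2 ^ n)
    (hap : IsAntiPowerPrefix m (2 ^ n + 1)) : thueMorse m = 1 := by
  by_contra hne
  have hzero : thueMorse m = 0 := by have := thueMorse_lt_two m; omega
  refine hap 0 (2 ^ n) (by positivity) (by omega) (pow_pos two_pos n).ne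
    (block_eq_block fun r hr => ?_)
  rw [thueMorse_two_pow_mul_add (by omega), hzero, zero_mul, zero_add, zero_add,
    Nat.mod_eq_of_lt (thueMorse_lt_two r)]

/-- With `H = 2^n < m ≤ 2H` and `t_{m+1} = 1`, `t_{m+2} = 0` would make blocks `H` and `2H`
coincide: position `r < H` of both reads `1 + t_{r+1}`, and position `r = H + s` of block `H`
is `H (m + 1) + s`, which reads `t_{m+2} + t_{s+1} = t_{s+1} = 1 + t_{r+1}`. -/
theorem thueMorse_succ_eq_one_of_isAntiPowerPrefix {m n : ℕ} (hlo : 2 ^ n < m)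
    (hhi : m ≤ 2 ^ (n + 1)) (hap : IsAntiPowerPrefix m (2 ^ (n + 1) + 1))
    (hm : thueMorse m = 1) : thueMorse (m + 1) = 1 := by
  by_contra hne
  have hzero : thueMorse (m + 1) = 0 := by have := thueMorse_lt_two (m + 1); omega
  have hpow : 2 ^ (n + 1) = 2 ^ n + 2 ^ n := by ring
  refine hap (2 ^ n) (2 ^ (n + 1)) (by omega) (by omega) (by omega)
    (block_eq_block fun r hr => ?_)
  rw [thueMorse_two_pow_mul_add (n := n + 1) (by omega), hm]
  rcases lt_or_ge r (2 ^ n) with hr | hr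
  · rw [thueMorse_two_pow_mul_add hr, hm]
  obtain ⟨s, rfl⟩ := Nat.exists_eq_add_of_le hr
  have hs : s < 2 ^ n := by omega
  have hshift : 2 ^ n * m + (2 ^ n + s) = 2 ^ n * (m + 1) + s := by ring
  rw [hshift, thueMorse_two_pow_mul_add hs, hzero, ← mul_one (2 ^ n),
    thueMorse_two_pow_mul_add hs, thueMorse_one]
  have := thueMorse_lt_two s
  omega

theorem stmt15_general (m : ℕ)
    (h : 2 ^ ell m + 1 < Kap m) :
    tm (m + 1) = 1 ∧ tm (m + 2) = 1 ∧ tm (2 * m + 1) = 1 ∧ tm (2 * m + 2) = 0 := by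
  have hap := isAntiPowerPrefix_of_lt_Kap h
  rw [ell_eq_clog] at hap
  have h₁ : thueMorse m = 1 :=
    thueMorse_eq_one_of_isAntiPowerPrefix (Nat.le_pow_clog one_lt_two m) hap
  have h₂ : thueMorse (m + 1) = 1 := by
    rcases le_or_gt m 1 with hm | hm
    · interval_cases m
      · simp [thueMorse_zero] at h₁
      · simpa [thueMorse_one] using thueMorse_two_mul 1
    obtain ⟨n, hn⟩ := Nat.exists_eq_add_of_lt (Nat.clog_pos one_lt_two hm)
    rw [zero_add] at hn
    rw [hn] at hap
    refine thueMorse_succ_eq_one_of_isAntiPowerPrefix ?_ ?_ hap h₁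
    · simpa [hn] using Nat.pow_pred_clog_lt_self one_lt_two hm
    · simpa [hn] using Nat.le_pow_clog one_lt_two m
  refine ⟨h₁, h₂, ?_, ?_⟩
  · rw [tm_succ, thueMorse_two_mul, h₁]
  · rw [show 2 * m + 2 = 2 * m + 1 + 1 by ring, tm_succ, thueMorse_two_mul_add_one, h₁]

theorem stmt15 (m : ℕ) (hm : Odd m) (hmpos : 0 < m)
    (h : 2 ^ ell m + 1 < Kap m) :
    tm (m + 1) = 1 ∧ tm (m + 2) = 1 ∧ tm (2 * m + 1) = 1 ∧ tm (2 * m + 2) = 0 :=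
  stmt15_general m h
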